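/- arXiv:1305.1461 — 2 statements merged into one kernel-verified Lean document; each statement's English description precedes it below -/
import Mathlib

section
/- Let p be a prime, r \geq 1, j = \lceil r/2 \rceil, and let M be a symmetric n\times n integer matrix, a an integer coprime to p, and m \in \mathbb{Z}^n. Then |\sum_{b mod p^r} e_{p^r}(a b^T M b + b\cdot m)| \leq p^{n(r-j)} \cdot \#\{b_1 mod p^j : 2 a M b_1 + m \equiv 0 mod p^{r-j}\}. -/
open scoped Real Classical

/-- `e_q(x) = e^{2πix/q}`. -/
noncomputable def eFun (q : ℕ) (x : ℤ) : ℂ :=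
  Complex.exp (2 * π * Complex.I * x / q)

/-- The quadratic form `b ↦ bᵀ M b` attached to an integer matrix `M`. -/
def QF {n : ℕ} (M : Matrix (Fin n) (Fin n) ℤ) (b : Fin n → ℤ) : ℤ :=
  dotProduct b (M.mulVec b)

/-! Write `b = b₁ + p^j b₂` with `b₁` modulo `p^j` and `b₂` modulo `p^(r-j)`. Because
`p^r ∣ p^(2j)`, the phase `a bᵀMb + b·m` is congruent modulo `p^r` to
`a b₁ᵀMb₁ + b₁·m + p^j b₂·(2aMb₁ + m)` (symmetry of `M` merges the two cross terms). The sum over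
`b₂` is then a complete character sum modulo `p^(r-j)`: it equals `p^(n(r-j))` when
`2aMb₁ + m ≡ 0 (mod p^(r-j))` and vanishes otherwise. The triangle inequality over `b₁` finishes. -/

open Finset Matrix

lemma eFun_add (q : ℕ) (x y : ℤ) : eFun q (x + y) = eFun q x * eFun q y := by
  rw [eFun, eFun, eFun, ← Complex.exp_add]
  congr 1
  push_cast
  ring

lemma eFun_sum {ι : Type*} (q : ℕ) (s : Finset ι) (f : ι → ℤ) :
    eFun q (∑ i ∈ s, f i) = ∏ i ∈ s, eFun q (f i) := by
  simp only [eFun, ← Complex.exp_sum, Int.cast_sum, mul_sum, sum_div]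

lemma eFun_natCast_mul (q t : ℕ) (x : ℤ) : eFun q (t * x) = eFun q x ^ t := by
  rw [eFun, eFun, ← Complex.exp_nat_mul]
  congr 1
  push_cast
  ring

lemma eFun_of_dvd {q : ℕ} {x : ℤ} (h : (q : ℤ) ∣ x) : eFun q x = 1 := by
  obtain ⟨k, rfl⟩ := h
  rcases eq_or_ne q 0 with rfl | hq
  · simp [eFun]
  · rw [eFun, ← Complex.exp_int_mul_two_pi_mul_I k]
    congr 1
    push_cast
    field_simp

lemma eFun_eq_one_iff {q : ℕ} (hq : q ≠ 0) {x : ℤ} : eFun q x = 1 ↔ (q : ℤ) ∣ x := by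
  refine ⟨fun h => ?_, eFun_of_dvd⟩
  obtain ⟨k, hk⟩ := Complex.exp_eq_one_iff.mp h
  have hx : (x : ℂ) = k * q := by
    field_simp at hk
    linear_combination hk
  exact ⟨k, by rw [mul_comm]; exact_mod_cast hx⟩

lemma eFun_mul_mul_left {s : ℕ} (hs : s ≠ 0) (q : ℕ) (x : ℤ) :
    eFun (s * q) (s * x) = eFun q x := by
  rw [eFun, eFun]
  congr 1
  push_cast
  rcases eq_or_ne q 0 with rfl | hq
  · simp
  · field_simp

lemma norm_eFun (q : ℕ) (x : ℤ) : ‖eFun q x‖ = 1 := by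
  rw [eFun, Complex.norm_exp]
  simp [Complex.div_re]

lemma sum_range_eFun_mul (q : ℕ) (c : ℤ) :
    ∑ t ∈ range q, eFun q (t * c) = if (q : ℤ) ∣ c then (q : ℂ) else 0 := by
  simp only [eFun_natCast_mul]
  split_ifs with h
  · simp [eFun_of_dvd h]
  rcases eq_or_ne q 0 with rfl | hq
  · simp
  have hc : eFun q c ≠ 1 := (eFun_eq_one_iff hq).not.mpr h
  rw [geom_sum_eq hc, ← eFun_natCast_mul, eFun_of_dvd (dvd_mul_right _ _), sub_self, zero_div]

lemma sum_piFinset_eFun_dotProduct {ι : Type*} [Fintype ι] [DecidableEq ι] (q : ℕ) (c : ι → ℤ) :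
    ∑ b ∈ Fintype.piFinset (fun _ : ι => range q), eFun q ((fun i => (b i : ℤ)) ⬝ᵥ c) =
      if ∀ i, (q : ℤ) ∣ c i then (q : ℂ) ^ Fintype.card ι else 0 := by
  simp only [dotProduct, eFun_sum]
  rw [sum_prod_piFinset (range q) fun i t => eFun q (t * c i)]
  simp only [sum_range_eFun_mul, prod_ite_zero, prod_const, card_univ, mem_univ, true_imp_iff]

lemma sum_piFinset_range_mul {ι β : Type*} [Fintype ι] [DecidableEq ι] [AddCommMonoid β]
    {s : ℕ} (hs : s ≠ 0) (t : ℕ) (f : (ι → ℕ) → β) :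
    ∑ b ∈ Fintype.piFinset (fun _ : ι => range (s * t)), f b =
      ∑ b₁ ∈ Fintype.piFinset (fun _ : ι => range s),
        ∑ b₂ ∈ Fintype.piFinset (fun _ : ι => range t), f (b₁ + s • b₂) := by
  have hs' : 0 < s := Nat.pos_of_ne_zero hs
  rw [← sum_product']
  refine sum_nbij' (fun b => (fun i => b i % s, fun i => b i / s)) (fun z => z.1 + s • z.2)
    ?_ ?_ ?_ ?_ ?_
  · intro b hb
    simp only [mem_product, Fintype.mem_piFinset, mem_range] at hb ⊢
    exact ⟨fun i => Nat.mod_lt _ hs', fun i => Nat.div_lt_of_lt_mul (hb i)⟩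
  · rintro ⟨b₁, b₂⟩ hb
    simp only [mem_product, Fintype.mem_piFinset, mem_range] at hb ⊢
    intro i
    simp only [Pi.add_apply, Pi.smul_apply, smul_eq_mul]
    nlinarith [hb.1 i, hb.2 i]
  · intro b _
    funext i
    exact Nat.mod_add_div _ _
  · rintro ⟨b₁, b₂⟩ hb
    simp only [mem_product, Fintype.mem_piFinset, mem_range] at hb
    ext i
    · simp [Nat.mod_eq_of_lt (hb.1 i)]
    · simp [Nat.add_mul_div_left _ _ hs', Nat.div_eq_of_lt (hb.1 i)]
  · intro b _
    congr 1
    funext i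
    exact (Nat.mod_add_div _ _).symm

lemma QF_add_smul {n : ℕ} {M : Matrix (Fin n) (Fin n) ℤ} (hM : M.IsSymm) (x y : Fin n → ℤ)
    (c : ℤ) : QF M (x + c • y) = QF M x + c * (2 * (y ⬝ᵥ M *ᵥ x)) + c ^ 2 * QF M y := by
  have hxy : x ⬝ᵥ M *ᵥ y = y ⬝ᵥ M *ᵥ x := by
    rw [dotProduct_mulVec, ← mulVec_transpose, hM.eq, dotProduct_comm]
  simp only [QF, mulVec_add, mulVec_smul, add_dotProduct, dotProduct_add, smul_dotProduct,
    dotProduct_smul, smul_eq_mul, hxy]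
  ring

lemma eFun_quadratic_add_smul {n : ℕ} {M : Matrix (Fin n) (Fin n) ℤ} (hM : M.IsSymm)
    {s t : ℕ} (hs : s ≠ 0) (hts : t ∣ s) (a : ℤ) (m x y : Fin n → ℤ) :
    eFun (s * t) (a * QF M (x + (s : ℤ) • y) + (x + (s : ℤ) • y) ⬝ᵥ m) =
      eFun (s * t) (a * QF M x + x ⬝ᵥ m) * eFun t (y ⬝ᵥ ((2 * a) • M *ᵥ x + m)) := by
  obtain ⟨u, hu⟩ := hts
  have hs2 : (s : ℤ) ^ 2 = (s * t : ℕ) * u := by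
    subst hu
    push_cast
    ring
  have hphase : a * QF M (x + (s : ℤ) • y) + (x + (s : ℤ) • y) ⬝ᵥ m =
      (a * QF M x + x ⬝ᵥ m) + s * (y ⬝ᵥ ((2 * a) • M *ᵥ x + m)) +
        (s * t : ℕ) * (u * a * QF M y) := by
    rw [QF_add_smul hM, add_dotProduct, smul_dotProduct, dotProduct_add, dotProduct_smul,
      smul_eq_mul, smul_eq_mul]
    linear_combination (a * QF M y) * hs2
  rw [hphase, eFun_add, eFun_add, eFun_mul_mul_left hs, eFun_of_dvd (dvd_mul_right _ _),
    mul_one]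

theorem norm_sum_eFun_quadratic_le {n : ℕ} {M : Matrix (Fin n) (Fin n) ℤ} (hM : M.IsSymm)
    {s t : ℕ} (hs : s ≠ 0) (hts : t ∣ s) (a : ℤ) (m : Fin n → ℤ) :
    ‖∑ b ∈ Fintype.piFinset (fun _ : Fin n => range (s * t)),
        eFun (s * t) (a * QF M (fun i => (b i : ℤ)) + ∑ i, (b i : ℤ) * m i)‖ ≤
      (t : ℝ) ^ n * ((Fintype.piFinset fun _ : Fin n => range s).filter
          (fun b₁ => ∀ i, (t : ℤ) ∣ 2 * a * M.mulVec (fun i => (b₁ i : ℤ)) i + m i)).card := by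
  rw [sum_piFinset_range_mul hs]
  have hinner : ∀ b₁ : Fin n → ℕ,
      ∑ b₂ ∈ Fintype.piFinset (fun _ : Fin n => range t),
        eFun (s * t) (a * QF M (fun i => ((b₁ + s • b₂) i : ℤ)) +
          (fun i => ((b₁ + s • b₂) i : ℤ)) ⬝ᵥ m) =
      eFun (s * t) (a * QF M (fun i => (b₁ i : ℤ)) + (fun i => (b₁ i : ℤ)) ⬝ᵥ m) *
        if ∀ i, (t : ℤ) ∣ 2 * a * M.mulVec (fun i => (b₁ i : ℤ)) i + m i then (t : ℂ) ^ n
        else 0 := by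
    intro b₁
    have hcast : ∀ b₂ : Fin n → ℕ, (fun i => ((b₁ + s • b₂) i : ℤ)) =
        (fun i => (b₁ i : ℤ)) + (s : ℤ) • fun i => (b₂ i : ℤ) := by
      intro b₂
      ext i
      simp
    simp only [hcast, eFun_quadratic_add_smul hM hs hts]
    rw [← mul_sum, sum_piFinset_eFun_dotProduct]
    simp only [Pi.add_apply, Pi.smul_apply, smul_eq_mul, Fintype.card_fin]
  calc _ = ‖∑ b₁ ∈ Fintype.piFinset (fun _ : Fin n => range s),
          eFun (s * t) (a * QF M (fun i => (b₁ i : ℤ)) + (fun i => (b₁ i : ℤ)) ⬝ᵥ m) *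
            if ∀ i, (t : ℤ) ∣ 2 * a * M.mulVec (fun i => (b₁ i : ℤ)) i + m i then (t : ℂ) ^ n
            else 0‖ := by
        congr 1
        exact sum_congr rfl fun b₁ _ => hinner b₁
    _ ≤ ∑ b₁ ∈ Fintype.piFinset (fun _ : Fin n => range s), ‖_‖ := norm_sum_le _ _
    _ = ∑ b₁ ∈ (Fintype.piFinset fun _ : Fin n => range s).filter
          (fun b₁ => ∀ i, (t : ℤ) ∣ 2 * a * M.mulVec (fun i => (b₁ i : ℤ)) i + m i),
          (t : ℝ) ^ n := by
      rw [sum_filter]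
      refine sum_congr rfl fun b₁ _ => ?_
      rw [norm_mul, norm_eFun, one_mul, apply_ite norm, norm_zero, norm_pow, Complex.norm_natCast]
    _ = _ := by rw [sum_const, nsmul_eq_mul, mul_comm]

theorem stmt_6_general {n : ℕ} (p : ℕ) (hp : p.Prime) (r j : ℕ)
    (hj : j = (r + 1) / 2) (M : Matrix (Fin n) (Fin n) ℤ) (hsym : M.IsSymm)
    (a : ℤ) (m : Fin n → ℤ) :
    ‖(∑ b ∈ Fintype.piFinset fun _ : Fin n => Finset.range (p ^ r),
          eFun (p ^ r) (a * QF M (fun i => (b i : ℤ)) + ∑ i, (b i : ℤ) * m i))‖ ≤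
      (p : ℝ) ^ (n * (r - j)) *
        ((Fintype.piFinset fun _ : Fin n => Finset.range (p ^ j)).filter
          (fun b₁ => ∀ i, ((p : ℤ) ^ (r - j)) ∣
            (2 * a * M.mulVec (fun i => (b₁ i : ℤ)) i + m i))).card := by
  have hsplit : p ^ r = p ^ j * p ^ (r - j) := by rw [← pow_add]; congr 1; omega
  have hdvd : p ^ (r - j) ∣ p ^ j := pow_dvd_pow p (by omega)
  rw [hsplit, mul_comm n, pow_mul]
  exact_mod_cast norm_sum_eFun_quadratic_le hsym (pow_ne_zero j hp.ne_zero) hdvd a m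

/-- For a prime `p`, `r ≥ 1`, `j = ⌈r/2⌉`, a symmetric integer matrix `M`, `a`
coprime to `p`, and `m ∈ ℤⁿ`:
`|∑_{b mod p^r} e_{p^r}(a bᵀMb + b·m)| ≤ p^{n(r-j)} ⋅ #{b₁ mod p^j : 2aMb₁ + m ≡ 0 mod p^{r-j}}`. -/
theorem stmt_6 {n : ℕ} (p : ℕ) (hp : p.Prime) (r j : ℕ) (hr : 1 ≤ r)
    (hj : j = (r + 1) / 2) (M : Matrix (Fin n) (Fin n) ℤ) (hsym : M.IsSymm)
    (a : ℤ) (ha : IsCoprime a (p : ℤ)) (m : Fin n → ℤ) :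
    ‖(∑ b ∈ Fintype.piFinset fun _ : Fin n => Finset.range (p ^ r),
          eFun (p ^ r) (a * QF M (fun i => (b i : ℤ)) + ∑ i, (b i : ℤ) * m i))‖ ≤
      (p : ℝ) ^ (n * (r - j)) *
        ((Fintype.piFinset fun _ : Fin n => Finset.range (p ^ j)).filter
          (fun b₁ => ∀ i, ((p : ℤ) ^ (r - j)) ∣
            (2 * a * M.mulVec (fun i => (b₁ i : ℤ)) i + m i))).card :=
  stmt_6_general p hp r j hj M hsym a m
end

section
/- Let w: \mathbb{R} \to \mathbb{R} be smooth, supported in [1/2,1], with \int w = 1, and let h(x,y) = \sum_{j \geq 1} (xj)^{-1}(w(xj) - w(|y|/(xj))) for x > 0. Then for fixed y \neq 0 and Re(s) > 1, \int_0^{\infty} h(x,y) x^{s-1} dx = \zeta(s) [\tilde{w}(s-1) - |y|^{s-1} \tilde{w}(1-s)], where \tilde{w}(s) = \int_0^{\infty} w(x) x^{s-1} dx is the Mellin transform of w and \zeta is the Riemann zeta function. -/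
open MeasureTheory Set Complex

lemma aux_integrable {g : ℝ → ℂ} (hg : ContinuousOn g (Set.Ioi 0)) {b c : ℝ} (hb : 0 < b)
    (hsp : Function.support g ⊆ Set.Icc b c) (z : ℂ) :
    IntegrableOn (fun x : ℝ => (x : ℂ) ^ z * g x) (Set.Ioi 0) := by
  have hIcc : Set.Icc b c ⊆ Set.Ioi 0 := fun x hx => lt_of_lt_of_le hb hx.1
  set f : ℝ → ℂ := fun x => (x : ℂ) ^ z * g x with hf
  have hcts : ContinuousOn f (Set.Icc b c) := by
    apply ContinuousOn.mul
    · intro x hx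
      exact (Complex.continuousAt_ofReal_cpow_const x z
        (Or.inr (hIcc hx).out.ne')).continuousWithinAt
    · exact hg.mono hIcc
  have h1 : IntegrableOn f (Set.Icc b c) := hcts.integrableOn_Icc
  have h2 : f = Set.indicator (Set.Icc b c) f := by
    funext x
    by_cases hx : x ∈ Set.Icc b c
    · rw [Set.indicator_of_mem hx]
    · rw [Set.indicator_of_notMem hx]
      have : g x = 0 := by
        by_contra h
        exact hx (hsp h)
      simp [hf, this]
  have : Integrable f := by
    rw [h2]
    exact (integrable_indicator_iff measurableSet_Icc).mpr h1
  exact this.integrableOn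

/-- Let `w` be smooth, supported in `[1/2,1]`, with `∫w = 1`, and
`h(x,y) = ∑_{j≥1} (xj)⁻¹(w(xj) - w(|y|/(xj)))`. Then for fixed `y ≠ 0` and
`Re s > 1`, `∫₀^∞ h(x,y) x^{s-1} dx = ζ(s)[ŵ(s-1) - |y|^{s-1} ŵ(1-s)]`,
where `ŵ` is the Mellin transform of `w` and `ζ` the Riemann zeta function. -/
theorem stmt_14 (w : ℝ → ℝ) (hw : ContDiff ℝ (⊤ : ℕ∞) w)
    (hsupp : Function.support w ⊆ Set.Icc (1 / 2) 1)
    (hint : (∫ x, w x) = 1) (y : ℝ) (hy : y ≠ 0) (s : ℂ) (hs : 1 < s.re) :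
    (∫ x in Set.Ioi (0 : ℝ), (x : ℂ) ^ (s - 1) *
        ((∑' j : ℕ, (1 / (x * (j + 1))) *
          (w (x * (j + 1)) - w (|y| / (x * (j + 1))))) : ℝ)) =
      riemannZeta s *
        (mellin (fun t : ℝ => (w t : ℂ)) (s - 1) -
          ((|y| : ℝ) : ℂ) ^ (s - 1) * mellin (fun t : ℝ => (w t : ℂ)) (1 - s)) := by
  set a := |y| with ha_def
  have ha : 0 < a := abs_pos.mpr hy
  have hwc : Continuous w := hw.continuous
  -- support facts
  have hsupp2 : ∀ t : ℝ, w (a / t) ≠ 0 → t ∈ Set.Icc a (2 * a) := by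
    intro t h
    have h1 : a / t ∈ Set.Icc (1 / 2 : ℝ) 1 := hsupp h
    have ht : 0 < t := by
      rcases lt_trichotomy t 0 with h' | h' | h'
      · exfalso
        have : a / t < 0 := div_neg_of_pos_of_neg ha h'
        linarith [h1.1]
      · exfalso
        rw [h', div_zero] at h1
        linarith [h1.1]
      · exact h'
    refine ⟨(div_le_one ht).mp h1.2, ?_⟩
    have := (le_div_iff₀ ht).mp h1.1
    linarith
  set F : ℝ → ℂ := fun t => (t : ℂ)⁻¹ * ((w t : ℂ) - (w (a / t) : ℂ)) with hF_def
  set b₀ : ℝ := min (1 / 2) a with hb₀_def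
  set c₀ : ℝ := max 1 (2 * a) with hc₀_def
  have hb₀ : 0 < b₀ := lt_min (by norm_num) ha
  have hsF : Function.support F ⊆ Set.Icc b₀ c₀ := by
    intro t ht
    simp only [Function.mem_support, hF_def] at ht
    have hne : w t ≠ 0 ∨ w (a / t) ≠ 0 := by
      by_contra h
      push_neg at h
      rw [h.1, h.2] at ht
      simp at ht
    rcases hne with h | h
    · have h2 := hsupp h
      exact ⟨le_trans (min_le_left _ _) h2.1, le_trans h2.2 (le_max_left _ _)⟩
    · have h2 := hsupp2 t h
      exact ⟨le_trans (min_le_right _ _) h2.1, le_trans h2.2 (le_max_right _ _)⟩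
  have hFc : ContinuousOn F (Set.Ioi 0) := by
    apply ContinuousOn.mul
    · exact (Complex.continuous_ofReal.continuousOn).inv₀
        (fun t ht => ofReal_ne_zero.mpr (ne_of_gt ht))
    · apply ContinuousOn.sub
      · exact (Complex.continuous_ofReal.comp hwc).continuousOn
      · exact (Complex.continuous_ofReal.comp hwc).comp_continuousOn
          (continuousOn_const.div continuousOn_id (fun t ht => ne_of_gt ht))
  set c : ℕ → ℝ := fun j => (j : ℝ) + 1 with hc_def
  have hc : ∀ j, 0 < c j := fun j => by positivity
  set f : ℕ → ℝ → ℂ := fun j x => (x : ℂ) ^ (s - 1) * F (c j * x) with hf_def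
  -- integrability of each term
  have hInt : ∀ j, IntegrableOn (f j) (Set.Ioi 0) := by
    intro j
    apply aux_integrable (b := b₀ / c j) (c := c₀ / c j)
    · apply hFc.comp (continuousOn_const.mul continuousOn_id)
      intro x hx
      exact mul_pos (hc j) hx
    · exact div_pos hb₀ (hc j)
    · intro x hx
      have hx' : F (c j * x) ≠ 0 := Function.mem_support.mp hx
      have h2 := hsF hx'
      constructor
      · rw [div_le_iff₀ (hc j)]
        calc b₀ ≤ c j * x := h2.1
          _ = x * c j := mul_comm _ _
      · rw [le_div_iff₀ (hc j)]
        calc x * c j = c j * x := mul_comm _ _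
          _ ≤ c₀ := h2.2
  -- norm integrals
  set φ : ℝ → ℝ := fun u => u ^ (s.re - 1) * ‖F u‖ with hφ_def
  have hnorm_eq : ∀ j, (∫ x in Set.Ioi (0 : ℝ), ‖f j x‖) =
      (c j) ^ (-s.re) * ∫ u in Set.Ioi (0 : ℝ), φ u := by
    intro j
    have h1 : Set.EqOn (fun x => ‖f j x‖)
        (fun x => (c j) ^ (1 - s.re) * φ (c j * x)) (Set.Ioi 0) := by
      intro x hx
      have hx0 : (0 : ℝ) < x := hx
      simp only [hf_def, hφ_def, norm_mul,
        Complex.norm_cpow_eq_rpow_re_of_pos hx0]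
      have hre : (s - 1).re = s.re - 1 := by simp
      rw [hre, Real.mul_rpow (hc j).le hx0.le, ← mul_assoc, ← mul_assoc,
        ← Real.rpow_add (hc j)]
      norm_num
    rw [setIntegral_congr_fun measurableSet_Ioi h1, integral_const_mul,
      integral_comp_mul_left_Ioi φ 0 (hc j), mul_zero, smul_eq_mul, ← mul_assoc]
    congr 1
    rw [← Real.rpow_neg_one (c j), ← Real.rpow_add (hc j)]
    congr 1
    ring
  have hSum : Summable fun j => ∫ x in Set.Ioi (0 : ℝ), ‖f j x‖ := by
    apply Summable.congr (f := fun j => (c j) ^ (-s.re) * ∫ u in Set.Ioi (0 : ℝ), φ u)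
      _ (fun j => (hnorm_eq j).symm)
    apply Summable.mul_right
    have h0 : Summable (fun n : ℕ => (n : ℝ) ^ (-s.re)) :=
      Real.summable_nat_rpow.mpr (by linarith)
    have h1 := (summable_nat_add_iff 1).mpr h0
    apply h1.congr
    intro n
    simp only [hc_def]
    push_cast
    ring_nf
  -- rewrite LHS integrand as a tsum of f j
  have hLHS : (∫ x in Set.Ioi (0 : ℝ), (x : ℂ) ^ (s - 1) *
      ((∑' j : ℕ, (1 / (x * (j + 1))) *
        (w (x * (j + 1)) - w (a / (x * (j + 1))))) : ℝ)) =
      ∫ x in Set.Ioi (0 : ℝ), ∑' j, f j x := by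
    apply setIntegral_congr_fun measurableSet_Ioi
    intro x hx
    have hx0 : (0 : ℝ) < x := hx
    dsimp only
    rw [Complex.ofReal_tsum, ← tsum_mul_left]
    apply tsum_congr
    intro j
    have hxj : x * ((j : ℝ) + 1) = c j * x := mul_comm _ _
    simp only [hf_def, hF_def, hxj]
    push_cast
    ring
  -- each integral is a mellin transform
  have hmel : ∀ j, (∫ x in Set.Ioi (0 : ℝ), f j x) = ((c j : ℝ) : ℂ) ^ (-s) * mellin F s := by
    intro j
    have h1 : (∫ x in Set.Ioi (0 : ℝ), f j x) = mellin (fun t => F (c j * t)) s := by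
      simp only [mellin, smul_eq_mul, hf_def]
    rw [h1, mellin_comp_mul_left F s (hc j), smul_eq_mul]
  -- sum the geometric-type series
  have hzeta : (∑' j : ℕ, ((c j : ℝ) : ℂ) ^ (-s) * mellin F s) = riemannZeta s * mellin F s := by
    rw [tsum_mul_right]
    congr 1
    rw [zeta_eq_tsum_one_div_nat_add_one_cpow hs]
    apply tsum_congr
    intro j
    rw [cpow_neg, one_div]
    congr 2
    simp only [hc_def]
    push_cast
    ring
  -- compute mellin F s
  have hi1 : IntegrableOn (fun t : ℝ => (t : ℂ) ^ (s - 1 - 1) * ((w t : ℝ) : ℂ)) (Set.Ioi 0) := by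
    apply aux_integrable ((Complex.continuous_ofReal.comp hwc).continuousOn)
      (by norm_num : (0 : ℝ) < 1 / 2)
    intro t ht
    exact hsupp (by simpa using ht)
  have hi2 : IntegrableOn (fun t : ℝ => (t : ℂ) ^ (s - 1 - 1) * ((w (a / t) : ℝ) : ℂ))
      (Set.Ioi 0) := by
    apply aux_integrable _ ha
    · intro t ht
      exact hsupp2 t (by simpa using ht)
    · exact (Complex.continuous_ofReal.comp hwc).comp_continuousOn
        (continuousOn_const.div continuousOn_id (fun t ht => ne_of_gt ht))
  have hMF : mellin F s = mellin (fun t : ℝ => (w t : ℂ)) (s - 1) -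
      ((a : ℝ) : ℂ) ^ (s - 1) * mellin (fun t : ℝ => (w t : ℂ)) (1 - s) := by
    have e1 : mellin F s = mellin (fun t : ℝ => ((w t : ℂ) - (w (a / t) : ℂ))) (s - 1) := by
      simp only [mellin, smul_eq_mul]
      apply setIntegral_congr_fun measurableSet_Ioi
      intro t ht
      have ht0 : (t : ℂ) ≠ 0 := ofReal_ne_zero.mpr (ne_of_gt ht)
      simp only [hF_def]
      rw [show s - 1 - 1 = s - 1 + (-1) from by ring, cpow_add _ _ ht0, cpow_neg_one]
      ring
    have e2 : mellin (fun t : ℝ => ((w t : ℂ) - (w (a / t) : ℂ))) (s - 1) =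
        mellin (fun t : ℝ => (w t : ℂ)) (s - 1) -
          mellin (fun t : ℝ => ((w (a / t) : ℝ) : ℂ)) (s - 1) := by
      simp only [mellin, smul_eq_mul, mul_sub]
      exact integral_sub hi1 hi2
    have e3 : mellin (fun t : ℝ => ((w (a / t) : ℝ) : ℂ)) (s - 1) =
        ((a : ℝ) : ℂ) ^ (s - 1) * mellin (fun t : ℝ => (w t : ℂ)) (1 - s) := by
      have h4 : (fun t : ℝ => ((w (a / t) : ℝ) : ℂ)) =
          fun t : ℝ => (fun u : ℝ => ((w (a * u) : ℝ) : ℂ)) t⁻¹ := by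
        funext t
        rw [div_eq_mul_inv]
      rw [h4, mellin_comp_inv (fun u : ℝ => ((w (a * u) : ℝ) : ℂ)) (s - 1),
        show -(s - 1) = 1 - s from by ring,
        mellin_comp_mul_left (fun t : ℝ => ((w t : ℝ) : ℂ)) (1 - s) ha, smul_eq_mul,
        show -(1 - s) = s - 1 from by ring]
    rw [e1, e2, e3]
  -- assemble
  rw [hLHS, ← integral_tsum_of_summable_integral_norm hInt hSum]
  rw [tsum_congr hmel, hzeta, hMF]
end
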